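/- Let X = ℝ with Lebesgue measure ν, let γ > 0, and let φ : [0,∞) → ℝ be continuous and strictly increasing on [0,∞). Then the following two conditions are equivalent: (i) ψ(z) = φ(e^z) is strictly increasing and convex on ℝ; (ii) D_{φ,γ}(g,f) ≥ 0 for all g, f ∈ F_γ, and for all probability densities q, p ∈ F_γ (i.e., ⟨q⟩ = ⟨p⟩ = 1), D_{φ,γ}(q,p) = 0 holds if and only if q = p ν-almost everywhere. -/

import Mathlib

open MeasureTheory

/-- `⟨g^{1+γ}⟩`, `⟨g f^γ⟩`, `⟨f^{1+γ}⟩`-based functional density power divergence. -/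
noncomputable def FDPD {X : Type*} [MeasurableSpace X] (ν : Measure X)
    (φ : ℝ → ℝ) (γ : ℝ) (g f : X → NNReal) : ℝ :=
  (1 / γ) * φ (∫⁻ x, (g x : ENNReal) ^ (1 + γ) ∂ν).toReal
    - ((1 + γ) / γ) * φ (∫⁻ x, (g x : ENNReal) * (f x : ENNReal) ^ γ ∂ν).toReal
    + φ (∫⁻ x, (f x : ENNReal) ^ (1 + γ) ∂ν).toReal

/-- Membership in the class `F_γ`: measurable, not a.e. zero, with `⟨g^{1+γ}⟩ < ∞`. -/
def MemF {X : Type*} [MeasurableSpace X] (ν : Measure X) (γ : ℝ) (g : X → NNReal) : Prop :=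
  Measurable g ∧ ¬ (g =ᵐ[ν] 0) ∧ (∫⁻ x, (g x : ENNReal) ^ (1 + γ) ∂ν) ≠ ⊤

/-! By Hölder, `⟨g f^γ⟩ ≤ ⟨g^{1+γ}⟩^θ ⟨f^{1+γ}⟩^{1-θ}` with `θ = 1/(1+γ)`. Since `φ` is
increasing and `ψ = φ ∘ exp` is convex at the logarithms of the two factors,
`φ⟨g f^γ⟩ ≤ θ φ⟨g^{1+γ}⟩ + (1-θ) φ⟨f^{1+γ}⟩`, which is `D(g,f) ≥ 0` after multiplying by
`(1+γ)/γ`. If `D(q,p) = 0`, strict monotonicity forces equality in Hölder, so `q^{1+γ}` and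
`p^{1+γ}` are proportional and the normalisation `⟨q⟩ = ⟨p⟩ = 1` makes `q = p` a.e.

Conversely, `D ≥ 0` for constant multiples of the indicator of `[0,1]` is exactly
`ψ(θa + (1-θ)b) ≤ θψ(a) + (1-θ)ψ(b)` for the single weight `θ`. The set of weights for which
this holds is closed (`ψ` is continuous) and stable under `θ`-combinations, hence is all of
`[0,1]`. -/

open Real Set
open scoped ENNReal NNReal

namespace ENNReal

variable {α : Type*} [MeasurableSpace α] {μ : Measure α}

theorem lintegral_young_eq_one {p q : ℝ} (hpq : p.HolderConjugate q) {f g : α → ℝ≥0∞}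
    (hf : AEMeasurable f μ) (hf_norm : ∫⁻ a, f a ^ p ∂μ = 1) (hg_norm : ∫⁻ a, g a ^ q ∂μ = 1) :
    ∫⁻ a, f a ^ p / ENNReal.ofReal p + g a ^ q / ENNReal.ofReal q ∂μ = 1 := by
  simp only [div_eq_mul_inv]
  rw [lintegral_add_left' ((hf.pow_const p).mul_const _), lintegral_mul_const'' _ (hf.pow_const p),
    lintegral_mul_const' _ _ (by simp [hpq.symm.pos]), hf_norm, hg_norm, one_mul, one_mul,
    hpq.inv_add_inv_ennreal]

theorem rpow_mul_inv_lintegral_ae_eq_of_lintegral_mul_eq_Lp_mul_Lq {p q : ℝ}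
    (hpq : p.HolderConjugate q) {f g : α → ℝ≥0∞} (hf : AEMeasurable f μ) (hg : AEMeasurable g μ)
    (hf_ne_zero : ∫⁻ a, f a ^ p ∂μ ≠ 0) (hf_ne_top : ∫⁻ a, f a ^ p ∂μ ≠ ⊤)
    (hg_ne_zero : ∫⁻ a, g a ^ q ∂μ ≠ 0) (hg_ne_top : ∫⁻ a, g a ^ q ∂μ ≠ ⊤)
    (heq : ∫⁻ a, (f * g) a ∂μ = (∫⁻ a, f a ^ p ∂μ) ^ (1 / p) * (∫⁻ a, g a ^ q ∂μ) ^ (1 / q)) :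
    (fun a => f a ^ p * (∫⁻ c, f c ^ p ∂μ)⁻¹) =ᵐ[μ] fun a => g a ^ q * (∫⁻ c, g c ^ q ∂μ)⁻¹ := by
  set F := funMulInvSnorm f p μ
  set G := funMulInvSnorm g q μ
  have hF : AEMeasurable F μ := hf.mul_const _
  have hG : AEMeasurable G μ := hg.mul_const _
  have hF1 : ∫⁻ a, F a ^ p ∂μ = 1 :=
    lintegral_rpow_funMulInvSnorm_eq_one hpq.pos hf_ne_zero hf_ne_top
  have hG1 : ∫⁻ a, G a ^ q ∂μ = 1 :=
    lintegral_rpow_funMulInvSnorm_eq_one hpq.symm.pos hg_ne_zero hg_ne_top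
  set N := (∫⁻ a, f a ^ p ∂μ) ^ (1 / p) * (∫⁻ a, g a ^ q ∂μ) ^ (1 / q)
  have hN_ne_zero : N ≠ 0 := by
    simp [N, hf_ne_zero, hg_ne_zero, hf_ne_top, hg_ne_top, hpq.pos, hpq.symm.pos]
  have hN_ne_top : N ≠ ⊤ := by
    simp [N, ENNReal.mul_eq_top, hf_ne_zero, hg_ne_zero, hf_ne_top, hg_ne_top]
  have hFG : ∫⁻ a, F a * G a ∂μ = 1 := by
    have hfg : ∫⁻ a, F a * G a * N ∂μ = ∫⁻ a, (f * g) a ∂μ := by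
      refine lintegral_congr fun a => ?_
      rw [Pi.mul_apply, fun_eq_funMulInvSnorm_mul_eLpNorm f hf_ne_zero hf_ne_top,
        fun_eq_funMulInvSnorm_mul_eLpNorm g hg_ne_zero hg_ne_top]
      ring
    rw [lintegral_mul_const' _ _ hN_ne_top, heq] at hfg
    exact (ENNReal.mul_left_inj hN_ne_zero hN_ne_top).1 (hfg.trans (one_mul N).symm)
  have hyoung : (fun a => F a * G a) =ᵐ[μ]
      fun a => F a ^ p / ENNReal.ofReal p + G a ^ q / ENNReal.ofReal q :=
    ae_eq_of_ae_le_of_lintegral_le (ae_of_all _ fun a => young_inequality _ _ hpq)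
      (by rw [hFG]; exact one_ne_top)
      (((hF.pow_const p).div_const _).add ((hG.pow_const q).div_const _))
      (by rw [lintegral_young_eq_one hpq hF hF1 hG1, hFG])
  filter_upwards [hyoung, ae_lt_top' (hF.pow_const p) (hF1 ▸ one_ne_top),
    ae_lt_top' (hG.pow_const q) (hG1 ▸ one_ne_top)] with a ha hFa hGa
  rw [← funMulInvSnorm_rpow hpq.pos, ← funMulInvSnorm_rpow hpq.symm.pos]
  rcases (young_inequality_eq_iff _ _ hpq).1 ha with ⟨hFtop, -⟩ | ⟨-, hGtop⟩ | h
  · simp [F, hFtop, top_rpow_of_pos hpq.pos] at hFa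
  · simp [G, hGtop, top_rpow_of_pos hpq.symm.pos] at hGa
  · exact h

end ENNReal

theorem MeasureTheory.ae_eq_of_mul_const_ae_eq_of_lintegral_eq {α : Type*} [MeasurableSpace α]
    {μ : Measure α} {f g : α → ℝ≥0∞} {a b : ℝ≥0∞}
    (h : (fun x => f x * a) =ᵐ[μ] fun x => g x * b) (hfg : ∫⁻ x, f x ∂μ = ∫⁻ x, g x ∂μ)
    (hg_ne_zero : ∫⁻ x, g x ∂μ ≠ 0) (hg_ne_top : ∫⁻ x, g x ∂μ ≠ ⊤) (ha : a ≠ ⊤) (hb_ne_zero : b ≠ 0)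
    (hb_ne_top : b ≠ ⊤) : f =ᵐ[μ] g := by
  have hab : a = b := by
    have h' := lintegral_congr_ae h
    rw [lintegral_mul_const' _ _ ha, lintegral_mul_const' _ _ hb_ne_top, hfg] at h'
    exact (ENNReal.mul_right_inj hg_ne_zero hg_ne_top).1 h'
  subst hab
  filter_upwards [h] with x hx
  exact (ENNReal.mul_left_inj hb_ne_zero hb_ne_top).1 hx

theorem ConvexOn.map_rpow_mul_rpow_le {φ : ℝ → ℝ} (hψ : ConvexOn ℝ univ (fun z => φ (exp z)))
    {A B a b : ℝ} (hA : 0 < A) (hB : 0 < B) (ha : 0 ≤ a) (hb : 0 ≤ b) (hab : a + b = 1) :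
    φ (A ^ a * B ^ b) ≤ a * φ A + b * φ B := by
  have h := hψ.2 (mem_univ (log A)) (mem_univ (log B)) ha hb hab
  simp only [smul_eq_mul] at h
  rwa [exp_add, exp_log hA, exp_log hB, mul_comm a, mul_comm b,
    ← rpow_def_of_pos hA, ← rpow_def_of_pos hB] at h

section GeomMean

variable {φ : ℝ → ℝ} {A B C a b : ℝ}

theorem le_of_le_rpow_mul_rpow (hφ : MonotoneOn φ (Ici 0))
    (hψ : ConvexOn ℝ univ (fun z => φ (exp z))) (hA : 0 < A) (hB : 0 < B) (hC : 0 ≤ C)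
    (ha : 0 ≤ a) (hb : 0 ≤ b) (hab : a + b = 1) (hCAB : C ≤ A ^ a * B ^ b) :
    φ C ≤ a * φ A + b * φ B :=
  (hφ hC (mem_Ici.2 (by positivity)) hCAB).trans (hψ.map_rpow_mul_rpow_le hA hB ha hb hab)

theorem eq_rpow_mul_rpow_of_eq (hφ : StrictMonoOn φ (Ici 0))
    (hψ : ConvexOn ℝ univ (fun z => φ (exp z))) (hA : 0 < A) (hB : 0 < B) (hC : 0 ≤ C)
    (ha : 0 ≤ a) (hb : 0 ≤ b) (hab : a + b = 1) (hCAB : C ≤ A ^ a * B ^ b)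
    (heq : φ C = a * φ A + b * φ B) : C = A ^ a * B ^ b := by
  by_contra hne
  have hlt := hφ hC (mem_Ici.2 (by positivity)) (lt_of_le_of_ne hCAB hne)
  linarith [hψ.map_rpow_mul_rpow_le hA hB ha hb hab]

end GeomMean

section FDPD

variable {X : Type*} [MeasurableSpace X] {ν : Measure X} {γ : ℝ} {φ : ℝ → ℝ}

theorem Real.holderConjugate_one_add_div (hγ : 0 < γ) : (1 + γ).HolderConjugate ((1 + γ) / γ) := by
  simpa [Real.conjExponent] using Real.HolderConjugate.conjExponent (by linarith : 1 < 1 + γ)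

theorem ENNReal.rpow_rpow_one_add_div (hγ : γ ≠ 0) (x : ℝ≥0∞) :
    (x ^ γ) ^ ((1 + γ) / γ) = x ^ (1 + γ) := by
  rw [← ENNReal.rpow_mul, mul_div_cancel₀ _ hγ]

theorem lintegral_mul_rpow_le (hγ : 0 < γ) {g f : X → ℝ≥0∞} (hg : AEMeasurable g ν)
    (hf : AEMeasurable f ν) :
    ∫⁻ x, g x * f x ^ γ ∂ν ≤
      (∫⁻ x, g x ^ (1 + γ) ∂ν) ^ (1 / (1 + γ)) * (∫⁻ x, f x ^ (1 + γ) ∂ν) ^ (γ / (1 + γ)) := by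
  simpa only [Pi.mul_apply, ENNReal.rpow_rpow_one_add_div hγ.ne', one_div_div] using
    ENNReal.lintegral_mul_le_Lp_mul_Lq ν (Real.holderConjugate_one_add_div hγ) hg (hf.pow_const γ)

theorem rpow_mul_inv_lintegral_ae_eq_of_lintegral_mul_rpow_eq (hγ : 0 < γ) {g f : X → ℝ≥0∞}
    (hg : AEMeasurable g ν) (hf : AEMeasurable f ν)
    (hg_ne_zero : ∫⁻ x, g x ^ (1 + γ) ∂ν ≠ 0) (hg_ne_top : ∫⁻ x, g x ^ (1 + γ) ∂ν ≠ ⊤)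
    (hf_ne_zero : ∫⁻ x, f x ^ (1 + γ) ∂ν ≠ 0) (hf_ne_top : ∫⁻ x, f x ^ (1 + γ) ∂ν ≠ ⊤)
    (heq : ∫⁻ x, g x * f x ^ γ ∂ν =
      (∫⁻ x, g x ^ (1 + γ) ∂ν) ^ (1 / (1 + γ)) * (∫⁻ x, f x ^ (1 + γ) ∂ν) ^ (γ / (1 + γ))) :
    (fun x => g x ^ (1 + γ) * (∫⁻ y, g y ^ (1 + γ) ∂ν)⁻¹) =ᵐ[ν]
      fun x => f x ^ (1 + γ) * (∫⁻ y, f y ^ (1 + γ) ∂ν)⁻¹ := by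
  have hpow := ENNReal.rpow_rpow_one_add_div hγ.ne'
  simpa only [hpow] using ENNReal.rpow_mul_inv_lintegral_ae_eq_of_lintegral_mul_eq_Lp_mul_Lq
    (Real.holderConjugate_one_add_div hγ) hg (hf.pow_const γ) hg_ne_zero hg_ne_top
    (by simpa only [hpow] using hf_ne_zero) (by simpa only [hpow] using hf_ne_top)
    (by simpa only [Pi.mul_apply, hpow, one_div_div] using heq)

theorem FDPD_eq_mul_sub (hγ : γ ≠ 0) (hγ' : 1 + γ ≠ 0) (g f : X → ℝ≥0) :
    FDPD ν φ γ g f = (1 + γ) / γ *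
      (1 / (1 + γ) * φ (∫⁻ x, (g x : ℝ≥0∞) ^ (1 + γ) ∂ν).toReal
        + γ / (1 + γ) * φ (∫⁻ x, (f x : ℝ≥0∞) ^ (1 + γ) ∂ν).toReal
        - φ (∫⁻ x, (g x : ℝ≥0∞) * (f x : ℝ≥0∞) ^ γ ∂ν).toReal) := by
  unfold FDPD
  field_simp
  ring

theorem FDPD_eq_zero_of_ae_eq (hγ : 0 < γ) {g f : X → ℝ≥0} (h : g =ᵐ[ν] f) :
    FDPD ν φ γ g f = 0 := by
  have hpow : ∫⁻ x, (g x : ℝ≥0∞) ^ (1 + γ) ∂ν = ∫⁻ x, (f x : ℝ≥0∞) ^ (1 + γ) ∂ν :=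
    lintegral_congr_ae (h.mono fun x hx => by simp only [hx])
  have hmul : ∫⁻ x, (g x : ℝ≥0∞) * (f x : ℝ≥0∞) ^ γ ∂ν = ∫⁻ x, (f x : ℝ≥0∞) ^ (1 + γ) ∂ν := by
    refine lintegral_congr_ae (h.mono fun x hx => ?_)
    simp only [hx]
    rw [ENNReal.rpow_add_of_nonneg _ _ zero_le_one hγ.le, ENNReal.rpow_one]
  unfold FDPD
  rw [hpow, hmul]
  field_simp
  ring

namespace MemF

variable {g f : X → ℝ≥0}

theorem lintegral_rpow_ne_zero (hg : MemF ν γ g) (hγ : 0 ≤ 1 + γ) :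
    ∫⁻ x, (g x : ℝ≥0∞) ^ (1 + γ) ∂ν ≠ 0 := fun h =>
  hg.2.1 <| (ENNReal.ae_eq_zero_of_lintegral_rpow_eq_zero hγ
    hg.1.coe_nnreal_ennreal.aemeasurable h).mono fun x hx => by simpa using hx

theorem toReal_lintegral_rpow_pos (hg : MemF ν γ g) (hγ : 0 ≤ 1 + γ) :
    0 < (∫⁻ x, (g x : ℝ≥0∞) ^ (1 + γ) ∂ν).toReal :=
  ENNReal.toReal_pos (hg.lintegral_rpow_ne_zero hγ) hg.2.2

theorem lintegral_rpow_rpow_mul_ne_top (hγ : 0 < γ) (hg : MemF ν γ g) (hf : MemF ν γ f) :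
    (∫⁻ x, (g x : ℝ≥0∞) ^ (1 + γ) ∂ν) ^ (1 / (1 + γ)) *
      (∫⁻ x, (f x : ℝ≥0∞) ^ (1 + γ) ∂ν) ^ (γ / (1 + γ)) ≠ ⊤ :=
  ENNReal.mul_ne_top (ENNReal.rpow_ne_top_of_nonneg (by positivity) hg.2.2)
    (ENNReal.rpow_ne_top_of_nonneg (by positivity) hf.2.2)

theorem toReal_lintegral_mul_rpow_le (hγ : 0 < γ) (hg : MemF ν γ g) (hf : MemF ν γ f) :
    (∫⁻ x, (g x : ℝ≥0∞) * (f x : ℝ≥0∞) ^ γ ∂ν).toReal ≤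
      (∫⁻ x, (g x : ℝ≥0∞) ^ (1 + γ) ∂ν).toReal ^ (1 / (1 + γ)) *
        (∫⁻ x, (f x : ℝ≥0∞) ^ (1 + γ) ∂ν).toReal ^ (γ / (1 + γ)) := by
  rw [ENNReal.toReal_rpow, ENNReal.toReal_rpow, ← ENNReal.toReal_mul]
  exact ENNReal.toReal_mono (lintegral_rpow_rpow_mul_ne_top hγ hg hf)
    (lintegral_mul_rpow_le hγ hg.1.coe_nnreal_ennreal.aemeasurable
      hf.1.coe_nnreal_ennreal.aemeasurable)

theorem FDPD_nonneg (hγ : 0 < γ) (hφ : MonotoneOn φ (Ici 0))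
    (hψ : ConvexOn ℝ univ fun z => φ (exp z)) (hg : MemF ν γ g) (hf : MemF ν γ f) :
    0 ≤ FDPD ν φ γ g f := by
  rw [FDPD_eq_mul_sub hγ.ne' (by positivity)]
  exact mul_nonneg (by positivity) <| sub_nonneg.2 <| le_of_le_rpow_mul_rpow hφ hψ
    (hg.toReal_lintegral_rpow_pos (by positivity)) (hf.toReal_lintegral_rpow_pos (by positivity))
    ENNReal.toReal_nonneg (by positivity) (by positivity) (by field_simp)
    (toReal_lintegral_mul_rpow_le hγ hg hf)

theorem lintegral_mul_rpow_eq_of_FDPD_eq_zero (hγ : 0 < γ) (hφ : StrictMonoOn φ (Ici 0))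
    (hψ : ConvexOn ℝ univ fun z => φ (exp z)) (hg : MemF ν γ g) (hf : MemF ν γ f)
    (h : FDPD ν φ γ g f = 0) :
    ∫⁻ x, (g x : ℝ≥0∞) * (f x : ℝ≥0∞) ^ γ ∂ν =
      (∫⁻ x, (g x : ℝ≥0∞) ^ (1 + γ) ∂ν) ^ (1 / (1 + γ)) *
        (∫⁻ x, (f x : ℝ≥0∞) ^ (1 + γ) ∂ν) ^ (γ / (1 + γ)) := by
  rw [FDPD_eq_mul_sub hγ.ne' (by positivity), mul_eq_zero, sub_eq_zero] at h
  have hR := lintegral_rpow_rpow_mul_ne_top hγ hg hf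
  rw [← ENNReal.toReal_eq_toReal_iff' (ne_top_of_le_ne_top hR (lintegral_mul_rpow_le hγ
    hg.1.coe_nnreal_ennreal.aemeasurable hf.1.coe_nnreal_ennreal.aemeasurable)) hR,
    ENNReal.toReal_mul, ← ENNReal.toReal_rpow, ← ENNReal.toReal_rpow]
  exact eq_rpow_mul_rpow_of_eq hφ hψ (hg.toReal_lintegral_rpow_pos (by positivity))
    (hf.toReal_lintegral_rpow_pos (by positivity)) ENNReal.toReal_nonneg (by positivity)
    (by positivity) (by field_simp) (toReal_lintegral_mul_rpow_le hγ hg hf)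
    (h.resolve_left (by positivity)).symm

theorem ae_eq_of_FDPD_eq_zero (hγ : 0 < γ) (hφ : StrictMonoOn φ (Ici 0))
    (hψ : ConvexOn ℝ univ fun z => φ (exp z)) (hg : MemF ν γ g) (hf : MemF ν γ f)
    (hg_one : ∫⁻ x, (g x : ℝ≥0∞) ∂ν = 1) (hf_one : ∫⁻ x, (f x : ℝ≥0∞) ∂ν = 1)
    (h : FDPD ν φ γ g f = 0) : g =ᵐ[ν] f := by
  have h1γ : 0 < 1 + γ := by positivity
  have hg0 := hg.lintegral_rpow_ne_zero h1γ.le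
  have hf0 := hf.lintegral_rpow_ne_zero h1γ.le
  have hnorm := rpow_mul_inv_lintegral_ae_eq_of_lintegral_mul_rpow_eq hγ
    hg.1.coe_nnreal_ennreal.aemeasurable hf.1.coe_nnreal_ennreal.aemeasurable hg0 hg.2.2 hf0 hf.2.2
    (lintegral_mul_rpow_eq_of_FDPD_eq_zero hγ hφ hψ hg hf h)
  have hroot : (fun x => (g x : ℝ≥0∞) * (∫⁻ y, (g y : ℝ≥0∞) ^ (1 + γ) ∂ν)⁻¹ ^ (1 + γ)⁻¹) =ᵐ[ν]
      fun x => (f x : ℝ≥0∞) * (∫⁻ y, (f y : ℝ≥0∞) ^ (1 + γ) ∂ν)⁻¹ ^ (1 + γ)⁻¹ := by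
    filter_upwards [hnorm] with x hx
    simpa only [ENNReal.mul_rpow_of_nonneg _ _ (inv_nonneg.2 h1γ.le),
      ENNReal.rpow_rpow_inv h1γ.ne'] using congrArg (· ^ (1 + γ)⁻¹) hx
  filter_upwards [ae_eq_of_mul_const_ae_eq_of_lintegral_eq hroot (hg_one.trans hf_one.symm)
    (by simp [hf_one]) (by simp [hf_one]) (by simp [hg0, h1γ.le]) (by simp [hf.2.2, h1γ.le])
    (by simp [hf0, h1γ.le])]
    with x hx
  exact_mod_cast hx

end MemF

end FDPD

theorem Set.ordConnected_of_isClosed_of_weighted_mem {S : Set ℝ} {θ : ℝ} (hθ₀ : 0 < θ)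
    (hθ₁ : θ < 1) (hS : IsClosed S) (hcomb : ∀ s ∈ S, ∀ t ∈ S, θ * s + (1 - θ) * t ∈ S) :
    S.OrdConnected := by
  refine ⟨fun a ha b hb t ht => ?_⟩
  by_contra htS
  set l := sSup (S ∩ Icc a t)
  set r := sInf (S ∩ Icc t b)
  have hl : l ∈ S ∩ Icc a t :=
    (hS.inter isClosed_Icc).csSup_mem ⟨a, ha, left_mem_Icc.2 ht.1⟩ bddAbove_Icc.inter_of_right
  have hr : r ∈ S ∩ Icc t b :=
    (hS.inter isClosed_Icc).csInf_mem ⟨b, hb, right_mem_Icc.2 ht.2⟩ bddBelow_Icc.inter_of_right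
  have hlt : l < t := lt_of_le_of_ne hl.2.2 fun h => htS (h ▸ hl.1)
  have htr : t < r := lt_of_le_of_ne hr.2.1 fun h => htS (h ▸ hr.1)
  set m := θ * l + (1 - θ) * r
  have hm : m ∈ S := hcomb l hl.1 r hr.1
  rcases le_or_gt m t with hmt | htm
  · have : m ≤ l := le_csSup bddAbove_Icc.inter_of_right ⟨hm, by nlinarith [hl.2.1], hmt⟩
    nlinarith
  · have : r ≤ m := csInf_le bddBelow_Icc.inter_of_right ⟨hm, htm.le, by nlinarith [hr.2.2]⟩
    nlinarith

theorem ConvexOn.of_continuous_of_weighted {ψ : ℝ → ℝ} {θ : ℝ} (hθ₀ : 0 < θ) (hθ₁ : θ < 1)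
    (hψ : Continuous ψ) (h : ∀ x y, ψ (θ * x + (1 - θ) * y) ≤ θ * ψ x + (1 - θ) * ψ y) :
    ConvexOn ℝ univ ψ := by
  set S := {t : ℝ | ∀ x y, ψ (t * x + (1 - t) * y) ≤ t * ψ x + (1 - t) * ψ y}
  have hS : IsClosed S := by
    simp only [S, ofPred_forall]
    exact isClosed_iInter fun x => isClosed_iInter fun y => isClosed_le (by fun_prop) (by fun_prop)
  have hcomb : ∀ s ∈ S, ∀ t ∈ S, θ * s + (1 - θ) * t ∈ S := by
    intro s hs t ht x y
    calc ψ ((θ * s + (1 - θ) * t) * x + (1 - (θ * s + (1 - θ) * t)) * y)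
        = ψ (θ * (s * x + (1 - s) * y) + (1 - θ) * (t * x + (1 - t) * y)) := by ring_nf
      _ ≤ θ * ψ (s * x + (1 - s) * y) + (1 - θ) * ψ (t * x + (1 - t) * y) := h _ _
      _ ≤ θ * (s * ψ x + (1 - s) * ψ y) + (1 - θ) * (t * ψ x + (1 - t) * ψ y) :=
        add_le_add (mul_le_mul_of_nonneg_left (hs x y) hθ₀.le)
          (mul_le_mul_of_nonneg_left (ht x y) (sub_nonneg.2 hθ₁.le))
      _ = (θ * s + (1 - θ) * t) * ψ x + (1 - (θ * s + (1 - θ) * t)) * ψ y := by ring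
  have hIcc : Icc 0 1 ⊆ S :=
    (ordConnected_of_isClosed_of_weighted_mem hθ₀ hθ₁ hS hcomb).out
      (fun x y => by simp) (fun x y => by simp)
  refine ⟨convex_univ, fun x _ y _ a b ha hb hab => ?_⟩
  obtain rfl : b = 1 - a := by linarith
  exact hIcc ⟨ha, by linarith⟩ x y

section ExpBox

noncomputable def expBox (r : ℝ) : ℝ → ℝ≥0 := (Icc 0 1).indicator fun _ => (exp r).toNNReal

theorem coe_expBox (r x : ℝ) :
    (expBox r x : ℝ≥0∞) = (Icc 0 1).indicator (fun _ => ENNReal.ofReal (exp r)) x := by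
  rw [expBox, ENNReal.coe_indicator]
  rfl

theorem coe_expBox_rpow (r : ℝ) {c : ℝ} (hc : 0 < c) (x : ℝ) :
    (expBox r x : ℝ≥0∞) ^ c = expBox (r * c) x := by
  by_cases hx : x ∈ Icc (0 : ℝ) 1
  · simp [coe_expBox, hx, ENNReal.ofReal_rpow_of_pos (exp_pos r), ← exp_mul]
  · simp [coe_expBox, hx, hc]

theorem coe_expBox_mul (r s x : ℝ) : (expBox r x : ℝ≥0∞) * expBox s x = expBox (r + s) x := by
  by_cases hx : x ∈ Icc (0 : ℝ) 1
  · simp [coe_expBox, hx, ← ENNReal.ofReal_mul (exp_pos r).le, ← exp_add]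
  · simp [coe_expBox, hx]

theorem lintegral_expBox (r : ℝ) : ∫⁻ x, (expBox r x : ℝ≥0∞) = ENNReal.ofReal (exp r) := by
  simp [coe_expBox, lintegral_indicator_const measurableSet_Icc]

theorem memF_expBox {γ : ℝ} (hγ : 0 < 1 + γ) (r : ℝ) : MemF volume γ (expBox r) := by
  refine ⟨measurable_const.indicator measurableSet_Icc, fun h => ?_, ?_⟩
  · have h0 : ∫⁻ x, (expBox r x : ℝ≥0∞) = ∫⁻ _, 0 :=
      lintegral_congr_ae (h.mono fun x hx => by simp [hx])
    simp only [lintegral_expBox, lintegral_zero, ENNReal.ofReal_eq_zero] at h0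
    exact (exp_pos r).not_ge h0
  · simp only [coe_expBox_rpow r hγ, lintegral_expBox]
    exact ENNReal.ofReal_ne_top

theorem FDPD_expBox {γ : ℝ} (hγ : 0 < γ) (φ : ℝ → ℝ) (r s : ℝ) :
    FDPD volume φ γ (expBox r) (expBox s) =
      1 / γ * φ (exp (r * (1 + γ))) - (1 + γ) / γ * φ (exp (r + s * γ))
        + φ (exp (s * (1 + γ))) := by
  simp only [FDPD, coe_expBox_rpow _ (by positivity : 0 < 1 + γ), coe_expBox_rpow _ hγ,
    coe_expBox_mul, lintegral_expBox, ENNReal.toReal_ofReal (exp_pos _).le]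

theorem convexOn_comp_exp_of_FDPD_expBox_nonneg {γ : ℝ} (hγ : 0 < γ) {φ : ℝ → ℝ}
    (hφ : ContinuousOn φ (Ici 0)) (h : ∀ r s, 0 ≤ FDPD volume φ γ (expBox r) (expBox s)) :
    ConvexOn ℝ univ fun z => φ (exp z) := by
  have h1γ : 0 < 1 + γ := by positivity
  refine ConvexOn.of_continuous_of_weighted (θ := 1 / (1 + γ)) (by positivity)
    ((div_lt_one h1γ).2 (by linarith))
    (hφ.comp_continuous continuous_exp fun x => (exp_pos x).le) fun x y => ?_
  have hxy := h (x / (1 + γ)) (y / (1 + γ))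
  rw [FDPD_expBox hγ, div_mul_cancel₀ _ h1γ.ne', div_mul_cancel₀ _ h1γ.ne',
    show x / (1 + γ) + y / (1 + γ) * γ = 1 / (1 + γ) * x + (1 - 1 / (1 + γ)) * y by
      field_simp; ring] at hxy
  have hid : ∀ u v w : ℝ, 1 / (1 + γ) * u + (1 - 1 / (1 + γ)) * w - v =
      γ / (1 + γ) * (1 / γ * u - (1 + γ) / γ * v + w) := fun u v w => by
    field_simp; ring
  linarith [hid (φ (exp x)) (φ (exp (1 / (1 + γ) * x + (1 - 1 / (1 + γ)) * y))) (φ (exp y)),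
    mul_nonneg (by positivity : 0 ≤ γ / (1 + γ)) hxy]

end ExpBox

theorem fdpd_divergence_iff (γ : ℝ) (hγ : 0 < γ) (φ : ℝ → ℝ)
    (hφc : ContinuousOn φ (Set.Ici (0 : ℝ)))
    (hφm : StrictMonoOn φ (Set.Ici (0 : ℝ))) :
    (StrictMono (fun z : ℝ => φ (Real.exp z)) ∧
        ConvexOn ℝ Set.univ (fun z : ℝ => φ (Real.exp z))) ↔
      ((∀ g f : ℝ → NNReal, MemF volume γ g → MemF volume γ f →
          0 ≤ FDPD volume φ γ g f) ∧
        (∀ q p : ℝ → NNReal, MemF volume γ q → MemF volume γ p →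
          (∫⁻ x, (q x : ENNReal) ∂volume) = 1 → (∫⁻ x, (p x : ENNReal) ∂volume) = 1 →
          (FDPD volume φ γ q p = 0 ↔ q =ᵐ[volume] p))) := by
  constructor
  · rintro ⟨-, hψ⟩
    refine ⟨fun g f hg hf => hg.FDPD_nonneg hγ hφm.monotoneOn hψ hf,
      fun q p hq hp hq_one hp_one => ⟨hq.ae_eq_of_FDPD_eq_zero hγ hφm hψ hp hq_one hp_one,
        FDPD_eq_zero_of_ae_eq hγ⟩⟩
  · rintro ⟨hnonneg, -⟩
    refine ⟨fun a b hab => hφm (exp_pos a).le (exp_pos b).le (exp_lt_exp.2 hab),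
      convexOn_comp_exp_of_FDPD_expBox_nonneg hγ hφc fun r s => hnonneg _ _ ?_ ?_⟩ <;>
    exact memF_expBox (by positivity) _
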